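/- arXiv:2603.13641 — 3 statements merged into one kernel-verified Lean document; each statement's English description precedes it below -/
import Mathlib

section
/- For fixed q : X × A → ℝ and any kernel Q depending continuously on a parameter θ in a topological space Θ, with the soft value function v_{θ} defined as the unique fixed point of the soft Bellman operator T_{θ,λ}, the map θ ↦ v_{θ} is continuous (in sup norm). Consequently the softmax best-response policy π_{θ,λ}(a|x) = exp(Q_{θ,λ}(x,a)/λ)/∑_b exp(Q_{θ,λ}(x,b)/λ), where Q_{θ,λ}(x,a) = r(x,a) + β ∑_{x'} Q_θ(x'|x,a) v_θ(x'), is continuous in θ. -/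
open Finset Real Filter Topology Function

/-!
Each soft Bellman operator `T_θ` is a `β`-contraction of `X → ℝ` in the sup metric: log-sum-exp
is monotone and commutes with adding constants, hence `1`-Lipschitz, and averaging against a
probability kernel is `1`-Lipschitz. For contractions with a common constant `K`, the fixed points
satisfy `dist v_θ₀ v_θ ≤ dist v_θ₀ (T_θ v_θ₀) / (1 - K)`, whose right-hand side is continuous in
`θ` and vanishes at `θ₀`. The softmax policy is then a continuous function of `Q_θ` and `v_θ`.
-/

theorem ContractingWith.continuous_of_isFixedPt {Θ α : Type*} [TopologicalSpace Θ] [MetricSpace α]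
    {K : NNReal} {T : Θ → α → α} (hT : ∀ θ, ContractingWith K (T θ))
    (hTcont : ∀ w, Continuous fun θ => T θ w) {v : Θ → α} (hv : ∀ θ, IsFixedPt (T θ) (v θ)) :
    Continuous v := by
  refine continuous_iff_continuousAt.2 fun θ₀ => tendsto_iff_dist_tendsto_zero.2 ?_
  have hbound : ∀ θ, dist (v θ) (v θ₀) ≤ dist (v θ₀) (T θ (v θ₀)) / (1 - K) := fun θ => by
    rw [dist_comm]
    exact (hT θ).dist_le_of_fixedPoint _ (hv θ)
  have hlim : Tendsto (fun θ => dist (v θ₀) (T θ (v θ₀)) / (1 - K)) (𝓝 θ₀) (𝓝 0) := by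
    have := (((continuous_const (y := v θ₀)).dist (hTcont (v θ₀))).div_const
      (1 - (K : ℝ))).tendsto θ₀
    rwa [(hv θ₀).eq, dist_self, zero_div] at this
  exact squeeze_zero (fun _ => dist_nonneg) hbound hlim

section SoftBellman

variable {X A : Type*} [Fintype X] [Fintype A]

noncomputable def logSumExp (lam : ℝ) (y : A → ℝ) : ℝ :=
  lam * log (∑ a, exp (y a / lam))

noncomputable def softmax (lam : ℝ) (y : A → ℝ) : A → ℝ :=
  fun a => exp (y a / lam) / ∑ b, exp (y b / lam)

def softQ (β : ℝ) (r : X → A → ℝ) (P : X → A → X → ℝ) (w : X → ℝ) : X → A → ℝ :=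
  fun x a => r x a + β * ∑ x', P x a x' * w x'

noncomputable def softBellman (β lam : ℝ) (r : X → A → ℝ) (P : X → A → X → ℝ) (w : X → ℝ) :
    X → ℝ :=
  fun x => logSumExp lam (softQ β r P w x)

lemma sum_exp_pos [Nonempty A] (y : A → ℝ) : 0 < ∑ a, exp (y a) :=
  sum_pos (fun _ _ => exp_pos _) univ_nonempty

variable [Nonempty A] {lam : ℝ}

lemma logSumExp_mono (hlam : 0 < lam) {y z : A → ℝ} (h : y ≤ z) :
    logSumExp lam y ≤ logSumExp lam z := by
  refine mul_le_mul_of_nonneg_left (log_le_log (sum_exp_pos _) ?_) hlam.le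
  exact sum_le_sum fun a _ => exp_le_exp.2 (div_le_div_of_nonneg_right (h a) hlam.le)

lemma logSumExp_add_const (hlam : lam ≠ 0) (y : A → ℝ) (c : ℝ) :
    logSumExp lam (fun a => y a + c) = logSumExp lam y + c := by
  have hsum : ∑ a, exp ((y a + c) / lam) = (∑ a, exp (y a / lam)) * exp (c / lam) := by
    simp only [add_div, exp_add, sum_mul]
  rw [logSumExp, logSumExp, hsum, log_mul (sum_exp_pos _).ne' (exp_pos _).ne', log_exp, mul_add,
    mul_div_cancel₀ _ hlam]

lemma lipschitzWith_logSumExp (hlam : 0 < lam) : LipschitzWith 1 (logSumExp (A := A) lam) := by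
  refine LipschitzWith.of_dist_le_mul fun y z => ?_
  have hle : ∀ y z : A → ℝ, logSumExp lam y ≤ logSumExp lam z + dist y z := fun y z => by
    rw [← logSumExp_add_const hlam.ne']
    refine logSumExp_mono hlam fun a => ?_
    have := dist_le_pi_dist y z a
    rw [Real.dist_eq, abs_le] at this
    linarith
  have hyz := hle y z
  have hzy := hle z y
  rw [dist_comm] at hzy
  rw [NNReal.coe_one, one_mul, Real.dist_eq, abs_sub_le_iff]
  constructor <;> linarith

omit [Nonempty A] in
lemma dist_sum_mul_le_dist {p : X → ℝ} (hp : ∀ i, 0 ≤ p i) (hpsum : ∑ i, p i = 1)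
    (w w' : X → ℝ) : dist (∑ i, p i * w i) (∑ i, p i * w' i) ≤ dist w w' :=
  calc dist (∑ i, p i * w i) (∑ i, p i * w' i)
      = |∑ i, p i * (w i - w' i)| := by simp only [Real.dist_eq, ← sum_sub_distrib, mul_sub]
    _ ≤ ∑ i, |p i * (w i - w' i)| := abs_sum_le_sum_abs _ _
    _ ≤ ∑ i, p i * dist w w' := sum_le_sum fun i _ => by
        rw [abs_mul, abs_of_nonneg (hp i), ← Real.dist_eq]
        exact mul_le_mul_of_nonneg_left (dist_le_pi_dist w w' i) (hp i)
    _ = dist w w' := by rw [← sum_mul, hpsum, one_mul]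

omit [Nonempty A] in
lemma lipschitzWith_softQ {β : ℝ} (hβ : 0 ≤ β) (r : X → A → ℝ) {P : X → A → X → ℝ}
    (hP : ∀ x a x', 0 ≤ P x a x') (hPsum : ∀ x a, ∑ x', P x a x' = 1) :
    LipschitzWith β.toNNReal (softQ β r P) := by
  refine LipschitzWith.of_dist_le_mul fun w w' => ?_
  rw [Real.coe_toNNReal β hβ]
  refine (dist_pi_le_iff (by positivity)).2 fun x => (dist_pi_le_iff (by positivity)).2 fun a => ?_
  rw [softQ, softQ, dist_add_left, dist_eq_norm, ← mul_sub, norm_mul, Real.norm_of_nonneg hβ,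
    ← dist_eq_norm]
  exact mul_le_mul_of_nonneg_left (dist_sum_mul_le_dist (hP x a) (hPsum x a) w w') hβ

lemma contractingWith_softBellman {β : ℝ} (hβ : β ∈ Set.Ico (0 : ℝ) 1) (hlam : 0 < lam)
    (r : X → A → ℝ) {P : X → A → X → ℝ} (hP : ∀ x a x', 0 ≤ P x a x')
    (hPsum : ∀ x a, ∑ x', P x a x' = 1) :
    ContractingWith β.toNNReal (softBellman β lam r P) := by
  refine ⟨Real.toNNReal_lt_one.2 hβ.2, LipschitzWith.of_dist_le_mul fun w w' => ?_⟩
  have hq := (lipschitzWith_softQ hβ.1 r hP hPsum).dist_le_mul w w'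
  refine (dist_pi_le_iff (by positivity)).2 fun x => ?_
  calc dist (softBellman β lam r P w x) (softBellman β lam r P w' x)
      ≤ dist (softQ β r P w x) (softQ β r P w' x) := by
        have := (lipschitzWith_logSumExp hlam).dist_le_mul (softQ β r P w x) (softQ β r P w' x)
        rwa [NNReal.coe_one, one_mul] at this
    _ ≤ _ := (dist_le_pi_dist _ _ x).trans hq

omit [Fintype X] in
lemma continuous_softmax : Continuous (softmax (A := A) lam) :=
  continuous_pi fun _ => Continuous.div (by fun_prop) (by fun_prop) fun _ => (sum_exp_pos _).ne'

omit [Fintype A] [Nonempty A] in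
lemma continuous_softQ {Θ : Type*} [TopologicalSpace Θ] (β : ℝ) (r : X → A → ℝ)
    {P : Θ → X → A → X → ℝ} (hP : Continuous P) {w : Θ → X → ℝ} (hw : Continuous w) :
    Continuous fun θ => softQ β r (P θ) (w θ) := by
  unfold softQ
  fun_prop

lemma continuous_softBellman {Θ : Type*} [TopologicalSpace Θ] (β : ℝ) (hlam : 0 < lam)
    (r : X → A → ℝ) {P : Θ → X → A → X → ℝ} (hP : Continuous P) {w : Θ → X → ℝ}
    (hw : Continuous w) : Continuous fun θ => softBellman β lam r (P θ) (w θ) :=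
  continuous_pi fun x => (lipschitzWith_logSumExp hlam).continuous.comp
    ((continuous_apply x).comp (continuous_softQ β r hP hw))

end SoftBellman

theorem soft_value_and_softmax_policy_continuous_general
    {X A : Type*} [Fintype X] [Fintype A] [Nonempty A]
    {Θ : Type*} [TopologicalSpace Θ]
    (β lam : ℝ) (hβ : β ∈ Set.Ioo (0:ℝ) 1) (hlam : 0 < lam)
    (r : X → A → ℝ)
    (Q : Θ → X → A → X → ℝ)
    (hQnn : ∀ θ x a x', 0 ≤ Q θ x a x')
    (hQsum : ∀ θ x a, ∑ x', Q θ x a x' = 1)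
    (hQcont : ∀ x a x', Continuous fun θ => Q θ x a x')
    (v : Θ → X → ℝ)
    (hv : ∀ θ x, v θ x =
      lam * Real.log (∑ a, Real.exp ((r x a + β * ∑ x', Q θ x a x' * v θ x') / lam))) :
    Continuous v
    ∧ Continuous (fun θ => fun x a =>
        Real.exp ((r x a + β * ∑ x', Q θ x a x' * v θ x') / lam)
          / ∑ b, Real.exp ((r x b + β * ∑ x', Q θ x b x' * v θ x') / lam)) := by
  have hQ : Continuous Q := continuous_pi fun x => continuous_pi fun a => continuous_pi (hQcont x a)
  have hfix : ∀ θ, IsFixedPt (softBellman β lam r (Q θ)) (v θ) := fun θ =>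
    funext fun x => (hv θ x).symm
  have hvc : Continuous v :=
    ContractingWith.continuous_of_isFixedPt
      (fun θ => contractingWith_softBellman (Set.Ioo_subset_Ico_self hβ) hlam r (hQnn θ) (hQsum θ))
      (fun _ => continuous_softBellman β hlam r hQ continuous_const) hfix
  refine ⟨hvc, continuous_pi fun x => ?_⟩
  exact continuous_softmax.comp ((continuous_apply x).comp (continuous_softQ β r hQ hvc))

/-- the soft value function `θ ↦ v_θ` is continuous, and so is the
softmax best-response policy. -/
theorem soft_value_and_softmax_policy_continuous
    {X A : Type*} [Fintype X] [Fintype A] [Nonempty X] [Nonempty A]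
    {Θ : Type*} [TopologicalSpace Θ]
    (β lam : ℝ) (hβ : β ∈ Set.Ioo (0:ℝ) 1) (hlam : 0 < lam)
    (r : X → A → ℝ)
    (Q : Θ → X → A → X → ℝ)
    (hQnn : ∀ θ x a x', 0 ≤ Q θ x a x')
    (hQsum : ∀ θ x a, ∑ x', Q θ x a x' = 1)
    (hQcont : ∀ x a x', Continuous fun θ => Q θ x a x')
    (v : Θ → X → ℝ)
    (hv : ∀ θ x, v θ x =
      lam * Real.log (∑ a, Real.exp ((r x a + β * ∑ x', Q θ x a x' * v θ x') / lam))) :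
    Continuous v
    ∧ Continuous (fun θ => fun x a =>
        Real.exp ((r x a + β * ∑ x', Q θ x a x' * v θ x') / lam)
          / ∑ b, Real.exp ((r x b + β * ∑ x', Q θ x b x' * v θ x') / lam)) :=
  soft_value_and_softmax_policy_continuous_general β lam hβ hlam r Q hQnn hQsum hQcont v hv
end

section
/- For a finite discounted MDP, the value function V* (the unique fixed point of the Bellman optimality operator) is the unique optimal solution of the linear program: minimize ∑_x v(x) subject to v(x) ≥ r(x,a) + β ∑_{x'} Q(x'|x,a) v(x') for all (x,a). In particular, any feasible v satisfies v ≥ V* pointwise. -/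
open Finset Real

/-- `V*` is the unique optimal solution of the primal LP
`min ∑_x v(x)` over the Bellman-inequality feasible set, and every feasible `v`
dominates `V*` pointwise. -/
theorem primal_LP_characterization
    {X A : Type*} [Fintype X] [Fintype A] [Nonempty X] [Nonempty A]
    (β : ℝ) (hβ : β ∈ Set.Ioo (0:ℝ) 1)
    (r : X → A → ℝ) (Q : X → A → X → ℝ)
    (hQnn : ∀ x a x', 0 ≤ Q x a x') (hQsum : ∀ x a, ∑ x', Q x a x' = 1)
    (Vstar : X → ℝ)
    (hVstar : ∀ x, Vstar x = Finset.univ.sup' Finset.univ_nonempty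
      (fun a => r x a + β * ∑ x', Q x a x' * Vstar x')) :
    (∀ v : X → ℝ,
        (∀ x a, r x a + β * ∑ x', Q x a x' * v x' ≤ v x) →
        ∀ x, Vstar x ≤ v x)
    ∧ (∀ x a, r x a + β * ∑ x', Q x a x' * Vstar x' ≤ Vstar x)
    ∧ (∀ v : X → ℝ,
        (∀ x a, r x a + β * ∑ x', Q x a x' * v x' ≤ v x) →
        (∑ x, Vstar x ≤ ∑ x, v x) ∧ (∑ x, v x = ∑ x, Vstar x → v = Vstar)) := by
  obtain ⟨hβ0, hβ1⟩ := hβ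
  have hdom : ∀ v : X → ℝ,
      (∀ x a, r x a + β * ∑ x', Q x a x' * v x' ≤ v x) →
      ∀ x, Vstar x ≤ v x := by
    intro v hv
    set M : ℝ := Finset.univ.sup' Finset.univ_nonempty (fun x => Vstar x - v x) with hM
    have hMle : M ≤ 0 := by
      obtain ⟨x, -, hx⟩ := Finset.exists_mem_eq_sup' Finset.univ_nonempty
        (fun x => Vstar x - v x)
      obtain ⟨a, -, ha⟩ := Finset.exists_mem_eq_sup' (Finset.univ_nonempty (α := A))
        (fun a => r x a + β * ∑ x', Q x a x' * Vstar x')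
      have hVx : Vstar x = r x a + β * ∑ x', Q x a x' * Vstar x' := by
        rw [hVstar x, ha]
      have hsum : ∑ x', Q x a x' * Vstar x' - ∑ x', Q x a x' * v x'
          = ∑ x', Q x a x' * (Vstar x' - v x') := by
        rw [← Finset.sum_sub_distrib]
        congr 1; ext x'; ring
      have hbound : ∀ x', Q x a x' * (Vstar x' - v x') ≤ Q x a x' * M := by
        intro x'
        apply mul_le_mul_of_nonneg_left _ (hQnn x a x')
        exact Finset.le_sup' (fun x => Vstar x - v x) (Finset.mem_univ x')
      have key : M ≤ β * M := by
        calc M = Vstar x - v x := hx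
        _ ≤ (r x a + β * ∑ x', Q x a x' * Vstar x')
            - (r x a + β * ∑ x', Q x a x' * v x') := by
            have := hv x a
            rw [← hVx]; linarith
        _ = β * ∑ x', Q x a x' * (Vstar x' - v x') := by
            rw [← hsum]; ring
        _ ≤ β * ∑ x', Q x a x' * M := by
            apply mul_le_mul_of_nonneg_left _ hβ0.le
            exact Finset.sum_le_sum (fun x' _ => hbound x')
        _ = β * M := by
            rw [← Finset.sum_mul, hQsum x a, one_mul]
      nlinarith
    intro x
    have := Finset.le_sup' (fun x => Vstar x - v x) (Finset.mem_univ x)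
    rw [← hM] at this
    linarith
  refine ⟨hdom, ?_, ?_⟩
  · intro x a
    rw [hVstar x]
    exact Finset.le_sup' (fun a => r x a + β * ∑ x', Q x a x' * Vstar x')
      (Finset.mem_univ a)
  · intro v hv
    have hle := hdom v hv
    constructor
    · exact Finset.sum_le_sum (fun x _ => hle x)
    · intro hsum
      funext x
      have := (Finset.sum_eq_sum_iff_of_le (fun i _ => hle i)).mp hsum.symm x (Finset.mem_univ x)
      exact this.symm
end

section
/- Complementary slackness / strong duality for discounted MDPs: with V* the fixed point of the Bellman optimality operator, the occupation measure η^π of any stationary policy π that only plays actions attaining the maximum in the Bellman equation satisfies ∑_{x,a} r(x,a) η^π(x,a) = ∑_x μ₀(x) V*(x), i.e., the dual LP optimum equals the primal value ∑_x μ₀(x) V*(x). -/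
/-!
Pairing the flow constraints of `η` with an arbitrary `V` telescopes
`∑ η(x,a) (V x - β ∑ Q(x'|x,a) V x')` into `∑ μ₀ V`. By complementary slackness, on the
support of `η` the reward equals `V* x - β ∑ Q(x'|x,a) V* x'`, so the `η`-average of `r` is
that telescoped sum with `V = V*`.
-/

open Finset

theorem sum_mul_sub_discounted_next_of_flow {X A R : Type*} [Fintype X] [Fintype A]
    [CommRing R] (β : R) (μ₀ : X → R) (Q : X → A → X → R) (η : X → A → R)
    (hflow : ∀ x, ∑ a, η x a = μ₀ x + β * ∑ x', ∑ a', Q x' a' x * η x' a') (V : X → R) :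
    ∑ x, ∑ a, η x a * (V x - β * ∑ x', Q x a x' * V x') = ∑ x, μ₀ x * V x := by
  have hvisits : ∑ x, ∑ a, η x a * V x
      = ∑ x, μ₀ x * V x + β * ∑ x', ∑ x, ∑ a, Q x a x' * η x a * V x' :=
    calc ∑ x, ∑ a, η x a * V x
        = ∑ x', (μ₀ x' + β * ∑ x, ∑ a, Q x a x' * η x a) * V x' := by
          simp only [← sum_mul, hflow]
      _ = _ := by simp only [add_mul, sum_add_distrib, mul_sum, sum_mul, mul_assoc]
  have hnext : ∑ x, ∑ a, η x a * (β * ∑ x', Q x a x' * V x')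
      = β * ∑ x', ∑ x, ∑ a, Q x a x' * η x a * V x' :=
    calc ∑ x, ∑ a, η x a * (β * ∑ x', Q x a x' * V x')
        = ∑ x, ∑ x', ∑ a, β * (Q x a x' * η x a * V x') := by
          simp only [mul_sum]
          exact sum_congr rfl fun _ _ => sum_comm.trans <| sum_congr rfl fun _ _ =>
            sum_congr rfl fun _ _ => by ring
      _ = _ := by rw [sum_comm]; simp only [mul_sum]
  simp only [mul_sub, sum_sub_distrib, hvisits, hnext, add_sub_cancel_right]

theorem mdp_lp_strong_duality_greedy_general
    {X A : Type*} [Fintype X] [Fintype A]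
    (β : ℝ)
    (r : X → A → ℝ)
    (μ₀ : X → ℝ)
    (Q : X → A → X → ℝ)
    (Vstar : X → ℝ)
    (η : X → A → ℝ) (hηnn : ∀ x a, 0 ≤ η x a)
    (hflow : ∀ x, ∑ a, η x a = μ₀ x + β * ∑ x', ∑ a', Q x' a' x * η x' a')
    (hgreedy : ∀ x a, 0 < η x a →
      r x a + β * ∑ x', Q x a x' * Vstar x' = Vstar x) :
    ∑ x, ∑ a, r x a * η x a = ∑ x, μ₀ x * Vstar x := by
  have hslack : ∀ x a,
      r x a * η x a = η x a * (Vstar x - β * ∑ x', Q x a x' * Vstar x') := by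
    intro x a
    rcases (hηnn x a).eq_or_lt with hzero | hpos
    · simp [← hzero]
    · rw [← hgreedy x a hpos]; ring
  simp only [hslack]
  exact sum_mul_sub_discounted_next_of_flow β μ₀ Q η hflow Vstar

/-- complementary slackness / strong duality: the occupation
measure of a policy supported on greedy actions attains the primal value
`∑ μ₀ V*`. -/
theorem mdp_lp_strong_duality_greedy
    {X A : Type*} [Fintype X] [Fintype A] [Nonempty X] [Nonempty A]
    (β : ℝ) (hβ : β ∈ Set.Ioo (0:ℝ) 1)
    (r : X → A → ℝ)
    (μ₀ : X → ℝ) (hμ₀nn : ∀ x, 0 ≤ μ₀ x) (hμ₀sum : ∑ x, μ₀ x = 1)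
    (Q : X → A → X → ℝ)
    (hQnn : ∀ x a x', 0 ≤ Q x a x') (hQsum : ∀ x a, ∑ x', Q x a x' = 1)
    (Vstar : X → ℝ)
    (hVstar : ∀ x, Vstar x = Finset.univ.sup' Finset.univ_nonempty
      (fun a => r x a + β * ∑ x', Q x a x' * Vstar x'))
    (η : X → A → ℝ) (hηnn : ∀ x a, 0 ≤ η x a)
    (hflow : ∀ x, ∑ a, η x a = μ₀ x + β * ∑ x', ∑ a', Q x' a' x * η x' a')
    (hgreedy : ∀ x a, 0 < η x a →
      r x a + β * ∑ x', Q x a x' * Vstar x' = Vstar x) :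
    ∑ x, ∑ a, r x a * η x a = ∑ x, μ₀ x * Vstar x :=
  mdp_lp_strong_duality_greedy_general β r μ₀ Q Vstar η hηnn hflow hgreedy
end
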